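/- Under the hypotheses of the previous statement (purified oracles U_p, U_q for probability distributions p, q on [n], copy unitary U_copy, Ũ_p, Ũ_q, U := (I ⊗ H₂)(Ũ_p ⊗ |0⟩⟨0| + Ũ_q ⊗ |1⟩⟨1|)(I ⊗ (H₂ ∘ X)), and ψ := U(a₀ ⊗ e₁ ⊗ e₁ ⊗ |0⟩)), let Π' be the orthogonal projection of A ⊗ ℂⁿ ⊗ ℂⁿ ⊗ ℂ² onto the subspace (ℂ·a₀) ⊗ (ℂ·e₁) ⊗ ℂⁿ ⊗ (ℂ·|0⟩). Then ‖Π' ψ‖² = ¼ · Σ_{i∈[n]} (p_i − q_i)² = ‖p − q‖₂² / 4. -/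

import Mathlib

open scoped ComplexInnerProductSpace

/-- The tensor product of two vectors of Euclidean spaces, realized concretely:
`(tp f g) (a, b) = f a * g b`.  This realizes `EuclideanSpace ℂ (α × β)` as the
tensor product with the induced inner product. -/
noncomputable def tp {α β : Type*} (f : EuclideanSpace ℂ α) (g : EuclideanSpace ℂ β) :
    EuclideanSpace ℂ (α × β) := WithLp.toLp 2 (fun x => f x.1 * g x.2)

/-- Tensor of a vector of `EuclideanSpace ℂ α` with a vector of
`EuclideanSpace ℂ (β × γ)`, placed in `EuclideanSpace ℂ ((α × β) × γ)`. -/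
noncomputable def tpL {α β γ : Type*} (a : EuclideanSpace ℂ α) (z : EuclideanSpace ℂ (β × γ)) :
    EuclideanSpace ℂ ((α × β) × γ) := WithLp.toLp 2 (fun x => a x.1.1 * z (x.1.2, x.2))

/-- The standard orthonormal basis vector `e_i` of `ℂⁿ`. -/
noncomputable def eb {n : ℕ} (i : Fin n) : EuclideanSpace ℂ (Fin n) :=
  EuclideanSpace.single i 1

/-- The standard orthonormal basis vectors `|0⟩, |1⟩` of `ℂ²`. -/
noncomputable def qb (j : Fin 2) : EuclideanSpace ℂ (Fin 2) :=
  EuclideanSpace.single j 1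

/-!
With `z = a₀ ⊗ e₁ ⊗ e₁`, the Hadamard test produces
`ψ = ½ ((Ũ_p − Ũ_q) z ⊗ |0⟩ + (Ũ_p + Ũ_q) z ⊗ |1⟩)`.
Because `U_copy` writes the index `i` into the last register, only the `i = k` branch of
`Ũ_p z` reaches `a₀ ⊗ e₁ ⊗ e_k`, with amplitude `√p_k · ⟪U_p (a₀ ⊗ e₁), φ_k ⊗ e_k⟫ = p_k`.
The vectors `a₀ ⊗ e₁ ⊗ e_k ⊗ |0⟩` are orthonormal, so `‖Π' ψ‖²` is the sum over `k` of the
squared amplitudes `((p_k − q_k) / 2)²`.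
-/

section TensorVectors

variable {α β : Type*}

lemma inner_tp [Fintype α] [Fintype β] (f f' : EuclideanSpace ℂ α) (g g' : EuclideanSpace ℂ β) :
    ⟪tp f g, tp f' g'⟫ = ⟪f, f'⟫ * ⟪g, g'⟫ := by
  simp only [PiLp.inner_apply, RCLike.inner_apply, tp, Fintype.sum_prod_type, Finset.sum_mul_sum,
    map_mul]
  exact Finset.sum_congr rfl fun _ _ => Finset.sum_congr rfl fun _ _ => by ring

lemma tp_smul_left (c : ℂ) (f : EuclideanSpace ℂ α) (g : EuclideanSpace ℂ β) :
    tp (c • f) g = c • tp f g := by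
  ext x; simp [tp, mul_assoc]

lemma tp_smul_right (c : ℂ) (f : EuclideanSpace ℂ α) (g : EuclideanSpace ℂ β) :
    tp f (c • g) = c • tp f g := by
  ext x; simp [tp, mul_left_comm]

lemma tp_add_right (f : EuclideanSpace ℂ α) (g g' : EuclideanSpace ℂ β) :
    tp f (g + g') = tp f g + tp f g' := by
  ext x; simp [tp, mul_add]

lemma tp_sub_right (f : EuclideanSpace ℂ α) (g g' : EuclideanSpace ℂ β) :
    tp f (g - g') = tp f g - tp f g' := by
  ext x; simp [tp, mul_sub]

lemma tp_add_left (f f' : EuclideanSpace ℂ α) (g : EuclideanSpace ℂ β) :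
    tp (f + f') g = tp f g + tp f' g := by
  ext x; simp [tp, add_mul]

lemma tp_sub_left (f f' : EuclideanSpace ℂ α) (g : EuclideanSpace ℂ β) :
    tp (f - f') g = tp f g - tp f' g := by
  ext x; simp [tp, sub_mul]

lemma tp_sum_left {κ : Type*} (s : Finset κ) (f : κ → EuclideanSpace ℂ α)
    (g : EuclideanSpace ℂ β) : tp (∑ k ∈ s, f k) g = ∑ k ∈ s, tp (f k) g := by
  ext x; simp [tp, Finset.sum_mul]

lemma tp_tp {γ : Type*} (a : EuclideanSpace ℂ α) (b : EuclideanSpace ℂ β)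
    (c : EuclideanSpace ℂ γ) : tp (tp a b) c = tpL a (tp b c) := by
  ext x; simp [tp, tpL, mul_assoc]

lemma norm_tp [Fintype α] [Fintype β] (f : EuclideanSpace ℂ α) (g : EuclideanSpace ℂ β) :
    ‖tp f g‖ = ‖f‖ * ‖g‖ := by
  rw [← sq_eq_sq₀ (norm_nonneg _) (by positivity), mul_pow, ← RCLike.ofReal_inj (K := ℂ)]
  push_cast
  simp only [← inner_self_eq_norm_sq_to_K, inner_tp]

lemma Orthonormal.tp_left [Fintype α] [Fintype β] {κ : Type*} {f : EuclideanSpace ℂ α}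
    (hf : ‖f‖ = 1) {g : κ → EuclideanSpace ℂ β} (hg : Orthonormal ℂ g) :
    Orthonormal ℂ fun k => tp f (g k) :=
  ⟨fun i => by rw [norm_tp, hf, hg.1 i, one_mul],
    fun _ _ hij => (inner_tp ..).trans (by rw [hg.2 hij, mul_zero])⟩

lemma Orthonormal.tp_right [Fintype α] [Fintype β] {κ : Type*} {f : κ → EuclideanSpace ℂ α}
    (hf : Orthonormal ℂ f) {g : EuclideanSpace ℂ β} (hg : ‖g‖ = 1) :
    Orthonormal ℂ fun k => tp (f k) g :=
  ⟨fun i => by rw [norm_tp, hg, hf.1 i, mul_one],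
    fun _ _ hij => (inner_tp ..).trans (by rw [hf.2 hij, zero_mul])⟩

end TensorVectors

lemma orthonormal_eb (n : ℕ) : Orthonormal ℂ (eb (n := n)) :=
  EuclideanSpace.orthonormal_single

lemma norm_qb (j : Fin 2) : ‖qb j‖ = 1 := by simp [qb]

lemma inner_qb_zero_one : ⟪qb 0, qb 1⟫ = 0 := by
  simp [qb, EuclideanSpace.inner_single_left]

lemma Orthonormal.norm_sq_orthogonalProjectionOnto_span_range {𝕜 E ι : Type*} [RCLike 𝕜]
    [NormedAddCommGroup E] [InnerProductSpace 𝕜 E] [Fintype ι] {v : ι → E}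
    (hv : Orthonormal 𝕜 v) [(Submodule.span 𝕜 (Set.range v)).HasOrthogonalProjection] (x : E) :
    ‖((Submodule.span 𝕜 (Set.range v)).orthogonalProjectionOnto x : E)‖ ^ 2
      = ∑ i, ‖inner 𝕜 (v i) x‖ ^ 2 := by
  let b : OrthonormalBasis ι 𝕜 (Submodule.span 𝕜 (Set.range v)) :=
    (Module.Basis.span hv.linearIndependent).toOrthonormalBasis (by
      rw [funext (Module.Basis.span_apply hv.linearIndependent)]
      exact orthonormal_span hv)
  rw [← Submodule.coe_norm, ← b.sum_sq_norm_inner_right]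
  refine Finset.sum_congr rfl fun i _ => ?_
  rw [Submodule.inner_orthogonalProjectionOnto_eq_of_mem_left]
  simp [b]

section Oracles

variable {n : ℕ} {ι : Type*} [Fintype ι]

lemma oracle_copy_apply (a₀ : EuclideanSpace ℂ ι) (φ : Fin n → EuclideanSpace ℂ ι)
    (p : Fin n → ℝ) (e₁ : EuclideanSpace ℂ (Fin n))
    (Up : EuclideanSpace ℂ (ι × Fin n) ≃ₗᵢ[ℂ] EuclideanSpace ℂ (ι × Fin n))
    (hUp : Up (tp a₀ e₁) = ∑ i, (Real.sqrt (p i) : ℂ) • tp (φ i) (eb i))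
    (Ucopy : EuclideanSpace ℂ (Fin n × Fin n) ≃ₗᵢ[ℂ] EuclideanSpace ℂ (Fin n × Fin n))
    (hUcopy : ∀ i : Fin n, Ucopy (tp (eb i) e₁) = tp (eb i) (eb i))
    (UpI IUcopy UpdI : EuclideanSpace ℂ ((ι × Fin n) × Fin n) ≃ₗᵢ[ℂ]
      EuclideanSpace ℂ ((ι × Fin n) × Fin n))
    (hUpI : ∀ z c, UpI (tp z c) = tp (Up z) c)
    (hIUcopy : ∀ a z, IUcopy (tpL a z) = tpL a (Ucopy z))
    (hUpdI : ∀ z c, UpdI (tp z c) = tp (Up.symm z) c) :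
    UpdI (IUcopy (UpI (tp (tp a₀ e₁) e₁)))
      = ∑ i, (Real.sqrt (p i) : ℂ) • tp (Up.symm (tp (φ i) (eb i))) (eb i) := by
  rw [hUpI, hUp, tp_sum_left]
  simp only [tp_smul_left, map_sum, map_smul]
  refine Finset.sum_congr rfl fun i _ => ?_
  rw [tp_tp, hIUcopy, hUcopy, ← tp_tp, hUpdI]

lemma inner_oracle_copy_apply (a₀ : EuclideanSpace ℂ ι) (φ : Fin n → EuclideanSpace ℂ ι)
    (hφ : Orthonormal ℂ φ) (p : Fin n → ℝ) (hp0 : ∀ i, 0 ≤ p i) (e₁ : EuclideanSpace ℂ (Fin n))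
    (Up : EuclideanSpace ℂ (ι × Fin n) ≃ₗᵢ[ℂ] EuclideanSpace ℂ (ι × Fin n))
    (hUp : Up (tp a₀ e₁) = ∑ i, (Real.sqrt (p i) : ℂ) • tp (φ i) (eb i))
    (Ucopy : EuclideanSpace ℂ (Fin n × Fin n) ≃ₗᵢ[ℂ] EuclideanSpace ℂ (Fin n × Fin n))
    (hUcopy : ∀ i : Fin n, Ucopy (tp (eb i) e₁) = tp (eb i) (eb i))
    (UpI IUcopy UpdI : EuclideanSpace ℂ ((ι × Fin n) × Fin n) ≃ₗᵢ[ℂ]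
      EuclideanSpace ℂ ((ι × Fin n) × Fin n))
    (hUpI : ∀ z c, UpI (tp z c) = tp (Up z) c)
    (hIUcopy : ∀ a z, IUcopy (tpL a z) = tpL a (Ucopy z))
    (hUpdI : ∀ z c, UpdI (tp z c) = tp (Up.symm z) c) (k : Fin n) :
    ⟪tp (tp a₀ e₁) (eb k), UpdI (IUcopy (UpI (tp (tp a₀ e₁) e₁)))⟫ = p k := by
  have hφk : ⟪tp a₀ e₁, Up.symm (tp (φ k) (eb k))⟫ = Real.sqrt (p k) := by
    rw [← Up.inner_map_map, Up.apply_symm_apply, hUp, sum_inner,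
      Finset.sum_eq_single k (fun i _ hik => by
        rw [inner_smul_left, inner_tp, (orthonormal_eb n).2 hik, mul_zero, mul_zero])
        (by simp)]
    rw [inner_smul_left, inner_tp, inner_self_eq_norm_sq_to_K, inner_self_eq_norm_sq_to_K,
      hφ.1 k, (orthonormal_eb n).1 k]
    simp
  rw [oracle_copy_apply a₀ φ p e₁ Up hUp Ucopy hUcopy UpI IUcopy UpdI hUpI hIUcopy hUpdI,
    inner_sum, Finset.sum_eq_single k (fun i _ hik => by
      rw [inner_smul_right, inner_tp, (orthonormal_eb n).2 hik.symm, mul_zero, mul_zero])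
      (by simp),
    inner_smul_right, inner_tp, hφk, inner_self_eq_norm_sq_to_K, (orthonormal_eb n).1 k]
  simp [← Complex.ofReal_mul, Real.mul_self_sqrt (hp0 k)]

end Oracles

lemma hadamard_test_apply {κ : Type*} [Fintype κ]
    (Had Xg : EuclideanSpace ℂ (Fin 2) ≃ₗᵢ[ℂ] EuclideanSpace ℂ (Fin 2))
    (hHad0 : Had (qb 0) = ((Real.sqrt 2 : ℂ))⁻¹ • (qb 0 + qb 1))
    (hHad1 : Had (qb 1) = ((Real.sqrt 2 : ℂ))⁻¹ • (qb 0 - qb 1))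
    (hXg0 : Xg (qb 0) = qb 1)
    (CU IH IHX : EuclideanSpace ℂ (κ × Fin 2) ≃ₗᵢ[ℂ] EuclideanSpace ℂ (κ × Fin 2))
    (z a b : EuclideanSpace ℂ κ)
    (hCU0 : CU (tp z (qb 0)) = tp a (qb 0)) (hCU1 : CU (tp z (qb 1)) = tp b (qb 1))
    (hIH : ∀ y s, IH (tp y s) = tp y (Had s)) (hIHX : ∀ y s, IHX (tp y s) = tp y (Had (Xg s))) :
    IH (CU (IHX (tp z (qb 0)))) = (1 / 2 : ℂ) • (tp (a - b) (qb 0) + tp (a + b) (qb 1)) := by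
  have hsqrt : ((Real.sqrt 2 : ℂ))⁻¹ * ((Real.sqrt 2 : ℂ))⁻¹ = 1 / 2 := by
    rw [← mul_inv, ← Complex.ofReal_mul, Real.mul_self_sqrt zero_le_two]
    norm_num
  rw [hIHX, hXg0, hHad1, tp_smul_right, tp_sub_right, map_smul, map_sub, hCU0, hCU1, map_smul,
    map_sub, hIH, hIH, hHad0, hHad1, tp_smul_right, tp_smul_right, ← smul_sub, smul_smul, hsqrt,
    tp_add_right, tp_sub_right, tp_sub_left, tp_add_left]
  congr 1
  abel

theorem stmt6_general {n : ℕ} (hn : 1 ≤ n) {ι : Type*} [Fintype ι]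
    (a₀ : EuclideanSpace ℂ ι) (ha₀ : ‖a₀‖ = 1)
    (φ χ : Fin n → EuclideanSpace ℂ ι) (hφ : Orthonormal ℂ φ) (hχ : Orthonormal ℂ χ)
    (p q : Fin n → ℝ) (hp0 : ∀ i, 0 ≤ p i)
    (hq0 : ∀ i, 0 ≤ q i)
    (e₁ : EuclideanSpace ℂ (Fin n)) (he₁ : e₁ = eb ⟨0, hn⟩)
    -- the purified quantum query-access oracles for `p` and `q`:
    (Up Uq : EuclideanSpace ℂ (ι × Fin n) ≃ₗᵢ[ℂ] EuclideanSpace ℂ (ι × Fin n))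
    (hUp : Up (tp a₀ e₁) = ∑ i, (Real.sqrt (p i) : ℂ) • tp (φ i) (eb i))
    (hUq : Uq (tp a₀ e₁) = ∑ i, (Real.sqrt (q i) : ℂ) • tp (χ i) (eb i))
    -- the copy unitary:
    (Ucopy : EuclideanSpace ℂ (Fin n × Fin n) ≃ₗᵢ[ℂ] EuclideanSpace ℂ (Fin n × Fin n))
    (hUcopy : ∀ i : Fin n, Ucopy (tp (eb i) e₁) = tp (eb i) (eb i))
    -- `UpI = U_p ⊗ I`, `UqI = U_q ⊗ I` on `A ⊗ ℂⁿ ⊗ ℂⁿ`: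
    (UpI UqI : EuclideanSpace ℂ ((ι × Fin n) × Fin n) ≃ₗᵢ[ℂ]
      EuclideanSpace ℂ ((ι × Fin n) × Fin n))
    (hUpI : ∀ (z : EuclideanSpace ℂ (ι × Fin n)) (c : EuclideanSpace ℂ (Fin n)),
      UpI (tp z c) = tp (Up z) c)
    (hUqI : ∀ (z : EuclideanSpace ℂ (ι × Fin n)) (c : EuclideanSpace ℂ (Fin n)),
      UqI (tp z c) = tp (Uq z) c)
    -- `IUcopy = I ⊗ U_copy` on `A ⊗ ℂⁿ ⊗ ℂⁿ`:
    (IUcopy : EuclideanSpace ℂ ((ι × Fin n) × Fin n) ≃ₗᵢ[ℂ]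
      EuclideanSpace ℂ ((ι × Fin n) × Fin n))
    (hIUcopy : ∀ (a : EuclideanSpace ℂ ι) (z : EuclideanSpace ℂ (Fin n × Fin n)),
      IUcopy (tpL a z) = tpL a (Ucopy z))
    -- `UpdI = U_p† ⊗ I`, `UqdI = U_q† ⊗ I` on `A ⊗ ℂⁿ ⊗ ℂⁿ`:
    (UpdI UqdI : EuclideanSpace ℂ ((ι × Fin n) × Fin n) ≃ₗᵢ[ℂ]
      EuclideanSpace ℂ ((ι × Fin n) × Fin n))
    (hUpdI : ∀ (z : EuclideanSpace ℂ (ι × Fin n)) (c : EuclideanSpace ℂ (Fin n)),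
      UpdI (tp z c) = tp (Up.symm z) c)
    (hUqdI : ∀ (z : EuclideanSpace ℂ (ι × Fin n)) (c : EuclideanSpace ℂ (Fin n)),
      UqdI (tp z c) = tp (Uq.symm z) c)
    -- the Hadamard and Pauli-X gates on ℂ²:
    (Had : EuclideanSpace ℂ (Fin 2) ≃ₗᵢ[ℂ] EuclideanSpace ℂ (Fin 2))
    (hHad0 : Had (qb 0) = ((Real.sqrt 2 : ℂ))⁻¹ • (qb 0 + qb 1))
    (hHad1 : Had (qb 1) = ((Real.sqrt 2 : ℂ))⁻¹ • (qb 0 - qb 1))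
    (Xg : EuclideanSpace ℂ (Fin 2) ≃ₗᵢ[ℂ] EuclideanSpace ℂ (Fin 2))
    (hXg0 : Xg (qb 0) = qb 1)
    -- the controlled unitary `CU = Ũ_p ⊗ |0⟩⟨0| + Ũ_q ⊗ |1⟩⟨1|`:
    (CU : EuclideanSpace ℂ (((ι × Fin n) × Fin n) × Fin 2) ≃ₗᵢ[ℂ]
      EuclideanSpace ℂ (((ι × Fin n) × Fin n) × Fin 2))
    (hCU0 : ∀ z : EuclideanSpace ℂ ((ι × Fin n) × Fin n),
      CU (tp z (qb 0)) = tp (UpdI (IUcopy (UpI z))) (qb 0))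
    (hCU1 : ∀ z : EuclideanSpace ℂ ((ι × Fin n) × Fin n),
      CU (tp z (qb 1)) = tp (UqdI (IUcopy (UqI z))) (qb 1))
    -- `IH = I ⊗ Had` and `IHX = I ⊗ (Had ∘ X)` on `(A ⊗ ℂⁿ ⊗ ℂⁿ) ⊗ ℂ²`:
    (IH : EuclideanSpace ℂ (((ι × Fin n) × Fin n) × Fin 2) ≃ₗᵢ[ℂ]
      EuclideanSpace ℂ (((ι × Fin n) × Fin n) × Fin 2))
    (hIH : ∀ (z : EuclideanSpace ℂ ((ι × Fin n) × Fin n)) (s : EuclideanSpace ℂ (Fin 2)),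
      IH (tp z s) = tp z (Had s))
    (IHX : EuclideanSpace ℂ (((ι × Fin n) × Fin n) × Fin 2) ≃ₗᵢ[ℂ]
      EuclideanSpace ℂ (((ι × Fin n) × Fin n) × Fin 2))
    (hIHX : ∀ (z : EuclideanSpace ℂ ((ι × Fin n) × Fin n)) (s : EuclideanSpace ℂ (Fin 2)),
      IHX (tp z s) = tp z (Had (Xg s)))
    -- `ψ := U (a₀ ⊗ e₁ ⊗ e₁ ⊗ |0⟩)` where `U = IH ∘ CU ∘ IHX`:
    (ψ : EuclideanSpace ℂ (((ι × Fin n) × Fin n) × Fin 2))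
    (hψ : ψ = IH (CU (IHX (tp (tp (tp a₀ e₁) e₁) (qb 0))))) :
    -- `Π'` is the orthogonal projection onto `(ℂ·a₀) ⊗ (ℂ·e₁) ⊗ ℂⁿ ⊗ (ℂ·|0⟩)`, i.e. onto the
    -- span of the orthonormal family `(a₀ ⊗ e₁ ⊗ e_k ⊗ |0⟩)_{k ∈ [n]}`; the conclusion reads
    -- `‖Π' ψ‖² = ¼ ∑ᵢ (pᵢ − qᵢ)² = ‖p − q‖₂² / 4`:
    ‖(Submodule.orthogonalProjectionOnto
        (Submodule.span ℂ (Set.range fun k : Fin n => tp (tp (tp a₀ e₁) (eb k)) (qb 0))) ψ :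
      EuclideanSpace ℂ (((ι × Fin n) × Fin n) × Fin 2))‖ ^ 2
        = (1 / 4) * ∑ i, (p i - q i) ^ 2 ∧
      (1 / 4) * ∑ i, (p i - q i) ^ 2 = (Real.sqrt (∑ i, (p i - q i) ^ 2)) ^ 2 / 4 := by
  set v := fun k : Fin n => tp (tp (tp a₀ e₁) (eb k)) (qb 0)
  have hv : Orthonormal ℂ v := by
    have he₁_norm : ‖e₁‖ = 1 := he₁ ▸ (orthonormal_eb n).1 _
    exact ((orthonormal_eb n).tp_left (by rw [norm_tp, ha₀, he₁_norm, one_mul])).tp_right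
      (norm_qb 0)
  have hψ' := hψ.trans (hadamard_test_apply Had Xg hHad0 hHad1 hXg0 CU IH IHX _ _ _
    (hCU0 _) (hCU1 _) hIH hIHX)
  have hcoeff : ∀ k, ⟪v k, ψ⟫ = ((p k - q k) / 2 : ℝ) := fun k => by
    rw [hψ', inner_smul_right, inner_add_right, inner_tp, inner_tp, inner_qb_zero_one,
      inner_self_eq_norm_sq_to_K, norm_qb, inner_sub_right,
      inner_oracle_copy_apply a₀ φ hφ p hp0 e₁ Up hUp Ucopy hUcopy UpI IUcopy UpdI hUpI hIUcopy
        hUpdI,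
      inner_oracle_copy_apply a₀ χ hχ q hq0 e₁ Uq hUq Ucopy hUcopy UqI IUcopy UqdI hUqI hIUcopy
        hUqdI]
    push_cast
    ring
  refine ⟨?_, by rw [Real.sq_sqrt (Finset.sum_nonneg fun i _ => sq_nonneg _)]; ring⟩
  rw [hv.norm_sq_orthogonalProjectionOnto_span_range, Finset.mul_sum]
  refine Finset.sum_congr rfl fun k _ => ?_
  rw [hcoeff, Complex.norm_real, Real.norm_eq_abs, sq_abs]
  ring

/-- Purified quantum query-access oracles `U_p`, `U_q` for probability
distributions `p`, `q` on `[n]`, the copy unitary `U_copy`, the induced unitaries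
`Ũ_p = (U_p† ⊗ I)(I ⊗ U_copy)(U_p ⊗ I)` and `Ũ_q` on `A ⊗ ℂⁿ ⊗ ℂⁿ` (given through their
factors `U_p ⊗ I = UpI`, `I ⊗ U_copy = IUcopy`, `U_p† ⊗ I = UpdI`, etc.), the controlled
unitary `CU = Ũ_p ⊗ |0⟩⟨0| + Ũ_q ⊗ |1⟩⟨1|`, and `U := (I ⊗ H₂) ∘ CU ∘ (I ⊗ (H₂ ∘ X))` on
`(A ⊗ ℂⁿ ⊗ ℂⁿ) ⊗ ℂ²`.  With `ψ := U (a₀ ⊗ e₁ ⊗ e₁ ⊗ |0⟩)` and `Π'` the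
orthogonal projection onto `(ℂ·a₀) ⊗ (ℂ·e₁) ⊗ ℂⁿ ⊗ (ℂ·|0⟩)` (the span of the orthonormal
family `(a₀ ⊗ e₁ ⊗ e_k ⊗ |0⟩)_k`), we have `‖Π' ψ‖² = ¼ ∑ i, (p i − q i)² = ‖p − q‖₂²/4`. -/
theorem stmt6 {n : ℕ} (hn : 1 ≤ n) {ι : Type*} [Fintype ι] [DecidableEq ι]
    (a₀ : EuclideanSpace ℂ ι) (ha₀ : ‖a₀‖ = 1)
    (φ χ : Fin n → EuclideanSpace ℂ ι) (hφ : Orthonormal ℂ φ) (hχ : Orthonormal ℂ χ)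
    (p q : Fin n → ℝ) (hp0 : ∀ i, 0 ≤ p i) (hp1 : ∑ i, p i = 1)
    (hq0 : ∀ i, 0 ≤ q i) (hq1 : ∑ i, q i = 1)
    (e₁ : EuclideanSpace ℂ (Fin n)) (he₁ : e₁ = eb ⟨0, hn⟩)
    -- the purified quantum query-access oracles for `p` and `q`:
    (Up Uq : EuclideanSpace ℂ (ι × Fin n) ≃ₗᵢ[ℂ] EuclideanSpace ℂ (ι × Fin n))
    (hUp : Up (tp a₀ e₁) = ∑ i, (Real.sqrt (p i) : ℂ) • tp (φ i) (eb i))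
    (hUq : Uq (tp a₀ e₁) = ∑ i, (Real.sqrt (q i) : ℂ) • tp (χ i) (eb i))
    -- the copy unitary:
    (Ucopy : EuclideanSpace ℂ (Fin n × Fin n) ≃ₗᵢ[ℂ] EuclideanSpace ℂ (Fin n × Fin n))
    (hUcopy : ∀ i : Fin n, Ucopy (tp (eb i) e₁) = tp (eb i) (eb i))
    -- `UpI = U_p ⊗ I`, `UqI = U_q ⊗ I` on `A ⊗ ℂⁿ ⊗ ℂⁿ`:
    (UpI UqI : EuclideanSpace ℂ ((ι × Fin n) × Fin n) ≃ₗᵢ[ℂ]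
      EuclideanSpace ℂ ((ι × Fin n) × Fin n))
    (hUpI : ∀ (z : EuclideanSpace ℂ (ι × Fin n)) (c : EuclideanSpace ℂ (Fin n)),
      UpI (tp z c) = tp (Up z) c)
    (hUqI : ∀ (z : EuclideanSpace ℂ (ι × Fin n)) (c : EuclideanSpace ℂ (Fin n)),
      UqI (tp z c) = tp (Uq z) c)
    -- `IUcopy = I ⊗ U_copy` on `A ⊗ ℂⁿ ⊗ ℂⁿ`:
    (IUcopy : EuclideanSpace ℂ ((ι × Fin n) × Fin n) ≃ₗᵢ[ℂ]
      EuclideanSpace ℂ ((ι × Fin n) × Fin n))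
    (hIUcopy : ∀ (a : EuclideanSpace ℂ ι) (z : EuclideanSpace ℂ (Fin n × Fin n)),
      IUcopy (tpL a z) = tpL a (Ucopy z))
    -- `UpdI = U_p† ⊗ I`, `UqdI = U_q† ⊗ I` on `A ⊗ ℂⁿ ⊗ ℂⁿ`:
    (UpdI UqdI : EuclideanSpace ℂ ((ι × Fin n) × Fin n) ≃ₗᵢ[ℂ]
      EuclideanSpace ℂ ((ι × Fin n) × Fin n))
    (hUpdI : ∀ (z : EuclideanSpace ℂ (ι × Fin n)) (c : EuclideanSpace ℂ (Fin n)),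
      UpdI (tp z c) = tp (Up.symm z) c)
    (hUqdI : ∀ (z : EuclideanSpace ℂ (ι × Fin n)) (c : EuclideanSpace ℂ (Fin n)),
      UqdI (tp z c) = tp (Uq.symm z) c)
    -- the Hadamard and Pauli-X gates on ℂ²:
    (Had : EuclideanSpace ℂ (Fin 2) ≃ₗᵢ[ℂ] EuclideanSpace ℂ (Fin 2))
    (hHad0 : Had (qb 0) = ((Real.sqrt 2 : ℂ))⁻¹ • (qb 0 + qb 1))
    (hHad1 : Had (qb 1) = ((Real.sqrt 2 : ℂ))⁻¹ • (qb 0 - qb 1))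
    (Xg : EuclideanSpace ℂ (Fin 2) ≃ₗᵢ[ℂ] EuclideanSpace ℂ (Fin 2))
    (hXg0 : Xg (qb 0) = qb 1) (hXg1 : Xg (qb 1) = qb 0)
    -- the controlled unitary `CU = Ũ_p ⊗ |0⟩⟨0| + Ũ_q ⊗ |1⟩⟨1|`:
    (CU : EuclideanSpace ℂ (((ι × Fin n) × Fin n) × Fin 2) ≃ₗᵢ[ℂ]
      EuclideanSpace ℂ (((ι × Fin n) × Fin n) × Fin 2))
    (hCU0 : ∀ z : EuclideanSpace ℂ ((ι × Fin n) × Fin n),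
      CU (tp z (qb 0)) = tp (UpdI (IUcopy (UpI z))) (qb 0))
    (hCU1 : ∀ z : EuclideanSpace ℂ ((ι × Fin n) × Fin n),
      CU (tp z (qb 1)) = tp (UqdI (IUcopy (UqI z))) (qb 1))
    -- `IH = I ⊗ Had` and `IHX = I ⊗ (Had ∘ X)` on `(A ⊗ ℂⁿ ⊗ ℂⁿ) ⊗ ℂ²`:
    (IH : EuclideanSpace ℂ (((ι × Fin n) × Fin n) × Fin 2) ≃ₗᵢ[ℂ]
      EuclideanSpace ℂ (((ι × Fin n) × Fin n) × Fin 2))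
    (hIH : ∀ (z : EuclideanSpace ℂ ((ι × Fin n) × Fin n)) (s : EuclideanSpace ℂ (Fin 2)),
      IH (tp z s) = tp z (Had s))
    (IHX : EuclideanSpace ℂ (((ι × Fin n) × Fin n) × Fin 2) ≃ₗᵢ[ℂ]
      EuclideanSpace ℂ (((ι × Fin n) × Fin n) × Fin 2))
    (hIHX : ∀ (z : EuclideanSpace ℂ ((ι × Fin n) × Fin n)) (s : EuclideanSpace ℂ (Fin 2)),
      IHX (tp z s) = tp z (Had (Xg s)))
    -- `ψ := U (a₀ ⊗ e₁ ⊗ e₁ ⊗ |0⟩)` where `U = IH ∘ CU ∘ IHX`: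
    (ψ : EuclideanSpace ℂ (((ι × Fin n) × Fin n) × Fin 2))
    (hψ : ψ = IH (CU (IHX (tp (tp (tp a₀ e₁) e₁) (qb 0))))) :
    -- `Π'` is the orthogonal projection onto `(ℂ·a₀) ⊗ (ℂ·e₁) ⊗ ℂⁿ ⊗ (ℂ·|0⟩)`, i.e. onto the
    -- span of the orthonormal family `(a₀ ⊗ e₁ ⊗ e_k ⊗ |0⟩)_{k ∈ [n]}`; the conclusion reads
    -- `‖Π' ψ‖² = ¼ ∑ᵢ (pᵢ − qᵢ)² = ‖p − q‖₂² / 4`: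
    ‖(Submodule.orthogonalProjectionOnto
        (Submodule.span ℂ (Set.range fun k : Fin n => tp (tp (tp a₀ e₁) (eb k)) (qb 0))) ψ :
      EuclideanSpace ℂ (((ι × Fin n) × Fin n) × Fin 2))‖ ^ 2
        = (1 / 4) * ∑ i, (p i - q i) ^ 2 ∧
      (1 / 4) * ∑ i, (p i - q i) ^ 2 = (Real.sqrt (∑ i, (p i - q i) ^ 2)) ^ 2 / 4 :=
  stmt6_general hn a₀ ha₀ φ χ hφ hχ p q hp0 hq0 e₁ he₁ Up Uq hUp hUq Ucopy hUcopy UpI UqI hUpI hUqI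
    IUcopy hIUcopy UpdI UqdI hUpdI hUqdI Had hHad0 hHad1 Xg hXg0 CU hCU0 hCU1 IH hIH IHX hIHX ψ hψ
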